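/- Let (X,d) be a δ-hyperbolic metric space (δ ≥ 0), let R and r be natural numbers, and let x, x', v, z ∈ X satisfy: d(x, x') = r, d(v, x) + d(v, x') = r (v lies on a geodesic from x to x'), d(v, x) = ⌊r/2⌋, d(v, z) ≥ ⌊R/2⌋, d(x, z) ≤ ⌊R/2⌋ + 2δ + 1, and d(x', z) ≤ ⌊R/2⌋ + 2δ + 1. Then r ≤ 8δ + 4. -/
import Mathlib

/-- A metric space is δ-hyperbolic if for all `x,y,z,t` one has
`d(x,y) + d(z,t) ≤ max (d(x,z) + d(y,t)) (d(x,t) + d(y,z)) + 2δ`. -/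
def IsHyperbolicSpace (X : Type*) [MetricSpace X] (δ : ℝ) : Prop :=
  ∀ x y z t : X, dist x y + dist z t ≤
    max (dist x z + dist y t) (dist x t + dist y z) + 2 * δ

/-- If `v` is the midpoint of a geodesic from `x` to `x'` with `d(x,x') = r`, `v` is at
distance at least `⌊R/2⌋` from `z`, and both `x` and `x'` are within `⌊R/2⌋ + 2δ + 1`
of `z`, then `r ≤ 8δ + 4`. -/
theorem small_orbit_diameter_bound
    {X : Type*} [MetricSpace X] (δ : ℝ) (hδ : 0 ≤ δ)
    (hhyp : IsHyperbolicSpace X δ) (R r : ℕ) (x x' v z : X)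
    (h1 : dist x x' = r)
    (h2 : dist v x + dist v x' = r)
    (h3 : dist v x = (r / 2 : ℕ))
    (h4 : (↑(R / 2) : ℝ) ≤ dist v z)
    (h5 : dist x z ≤ (R / 2 : ℕ) + 2 * δ + 1)
    (h6 : dist x' z ≤ (R / 2 : ℕ) + 2 * δ + 1) :
    (r : ℝ) ≤ 8 * δ + 4 := by
  have key := hhyp x x' v z
  have hxv : dist x v = (r / 2 : ℕ) := by rw [dist_comm]; exact h3
  have hx'v : dist x' v = (r : ℝ) - (r / 2 : ℕ) := by
    rw [dist_comm]; linarith [h2, h3]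
  have hfloor1 : ((r / 2 : ℕ) : ℝ) ≤ (r : ℝ) / 2 := by
    have := Nat.cast_div_le (m := r) (n := 2) (α := ℝ)
    simpa using this
  have hfloor2 : (r : ℝ) - ((r / 2 : ℕ) : ℝ) ≤ ((r : ℝ) + 1) / 2 := by
    have h : r ≤ 2 * (r / 2) + 1 := by omega
    have : (r : ℝ) ≤ 2 * ((r / 2 : ℕ) : ℝ) + 1 := by exact_mod_cast h
    linarith
  rcases le_total (dist x v + dist x' z) (dist x z + dist x' v) with h | h
  · rw [max_eq_right h] at key
    rw [hx'v] at key
    linarith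
  · rw [max_eq_left h] at key
    rw [hxv] at key
    linarith
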